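/- Let r = r(n) be a sequence of integers with 1 ≤ r(n) ≤ n and r(n)/n → 0 as n → ∞. Then, as n → ∞: for m = 1, (d/dz) S_{n,r}(z) |_{z=0} ∼ (r/2) · log n, and for each fixed integer m ≥ 2, (d^m/dz^m) S_{n,r}(z) |_{z=0} ∼ (−1)^m · (m−2)! · r / (2 · n^{m−1}), where ∼ denotes that the ratio of the two sides tends to 1. -/

import Mathlib

open MeasureTheory Real Filter Finset

/-- `S n r z = Σ_{j=1}^{r} [ log Γ((n−r+j+z)/2) − log Γ((n−r+j)/2) ]`. -/
noncomputable def S (n r : ℕ) (z : ℝ) : ℝ :=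
  ∑ j ∈ Finset.Icc 1 r,
    (Real.log (Real.Gamma (((n : ℝ) - r + j + z) / 2))
      - Real.log (Real.Gamma (((n : ℝ) - r + j) / 2)))

/-- The `m`-th derivative of `z ↦ S n r z` evaluated at `z = 0`. -/
noncomputable def SderivAt0 (n r m : ℕ) : ℝ := iteratedDeriv m (S n r) 0

/-!
The `m`-th derivative of `S n r` at `0` is `2⁻ᵐ ∑ⱼ ψ⁽ᵐ⁻¹⁾(xⱼ)` with `xⱼ = (n - r + j) / 2`, and
since `r = o(n)` every `xⱼ` lies in `[(n - r) / 2, n / 2]`, i.e. is `n / 2 · (1 + o(1))`. For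
`m = 1`, convexity of `log Γ` and `log Γ(x + 1) = log Γ(x) + log x` trap `ψ(x)` between the secant
slopes `log (x - 1)` and `log x`, so `ψ(xⱼ) = log n + O(1)`. For `m ≥ 2`,
`ψ⁽ᵐ⁻¹⁾(x) = (-1)ᵐ (m-1)! ∑ₖ (x + k)⁻ᵐ`, and comparing the sum with `∫ₓ^∞ t⁻ᵐ dt` term by term
gives `∑ₖ (x + k)⁻ᵐ = x¹⁻ᵐ / (m - 1) · (1 + O(1 / x))`. In both cases the ratio in question is an
average over `j` of quantities squeezed between bounds tending to `1`.
-/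

open scoped Nat Topology

theorem summable_inv_add_pow (a : ℝ) {p : ℕ} (hp : 2 ≤ p) :
    Summable fun k : ℕ => ((a + k) ^ p)⁻¹ := by
  refine Summable.of_norm ?_
  convert (Real.summable_one_div_nat_add_rpow a p).2 (by exact_mod_cast hp) using 2 with k
  rw [norm_inv, norm_pow, Real.norm_eq_abs, Real.rpow_natCast, add_comm, one_div]

theorem hasSum_log_Gamma {x : ℝ} (hx : 0 < x) :
    HasSum (fun k : ℕ => x / (k + 1) - log (1 + x / (k + 1)))
      (log (Gamma x) + log x + eulerMascheroniConstant * x) := by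
  have hnonneg (k : ℕ) : 0 ≤ x / (k + 1) - log (1 + x / (k + 1)) := by
    linarith [log_le_sub_one_of_pos (show 0 < 1 + x / (k + 1) by positivity)]
  rw [hasSum_iff_tendsto_nat_of_nonneg hnonneg]
  have hpartial (n : ℕ) : ∑ k ∈ range n, (x / (k + 1) - log (1 + x / (k + 1))) =
      BohrMollerup.logGammaSeq x n + log x + x * (harmonic n - log n) := by
    induction n with
    | zero => simp [BohrMollerup.logGammaSeq]
    | succ n ih =>
      have h1 : log (1 + x / (n + 1)) = log (x + (n + 1)) - log (n + 1) := by
        rw [← log_div (by positivity) (by positivity)]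
        congr 1
        field_simp
        ring
      rw [sum_range_succ, ih, h1]
      simp only [BohrMollerup.logGammaSeq, harmonic_succ, Nat.factorial_succ, sum_range_succ]
      push_cast
      rw [log_mul (by positivity) (by positivity)]
      field_simp
      ring
  simp only [hpartial]
  simpa [mul_comm] using ((BohrMollerup.tendsto_log_gamma hx).add_const (log x)).add
    (tendsto_harmonic_sub_log.const_mul x)

/-- `polygamma m` is `ψ⁽ᵐ⁾ = (log Γ)⁽ᵐ⁺¹⁾` on `(0, ∞)`, given by its series (`ψ = ψ⁽⁰⁾`). -/
noncomputable def polygamma : ℕ → ℝ → ℝ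
  | 0, x => -eulerMascheroniConstant - x⁻¹ + ∑' k : ℕ, (((k : ℝ) + 1)⁻¹ - (x + k + 1)⁻¹)
  | m + 1, x => (-1) ^ m * (m + 1)! * ∑' k : ℕ, ((x + k) ^ (m + 2))⁻¹

theorem inv_sub_inv_add_mem_Icc {y : ℝ} (hy : 0 ≤ y) (k : ℕ) :
    ((k : ℝ) + 1)⁻¹ - (y + k + 1)⁻¹ ∈ Set.Icc 0 (y * ((1 + (k : ℝ)) ^ 2)⁻¹) := by
  have hk : (0 : ℝ) < k + 1 := by positivity
  have h : ((k : ℝ) + 1)⁻¹ - (y + k + 1)⁻¹ = y / ((k + 1) * (y + k + 1)) := by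
    field_simp
    ring
  rw [h, ← div_eq_mul_inv]
  refine ⟨by positivity, div_le_div_of_nonneg_left hy (by positivity) ?_⟩
  nlinarith

theorem hasDerivAt_log_Gamma {x : ℝ} (hx : 0 < x) :
    HasDerivAt (fun y => log (Gamma y)) (polygamma 0 x) x := by
  have hx' : x ∈ Set.Ioo 0 (x + 1) := ⟨hx, by linarith⟩
  have hseries : HasDerivAt (fun y : ℝ => ∑' k : ℕ, (y / (k + 1) - log (1 + y / (k + 1))))
      (∑' k : ℕ, (((k : ℝ) + 1)⁻¹ - (x + k + 1)⁻¹)) x := by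
    refine hasDerivAt_tsum_of_isPreconnected
      (g := fun (k : ℕ) (y : ℝ) => y / (k + 1) - log (1 + y / (k + 1)))
      (g' := fun (k : ℕ) (y : ℝ) => ((k : ℝ) + 1)⁻¹ - (y + k + 1)⁻¹)
      ((summable_inv_add_pow 1 le_rfl).mul_left (x + 1))
      isOpen_Ioo isPreconnected_Ioo (fun k y hy => ?_) (fun k y hy => ?_) hx'
      (hasSum_log_Gamma hx).summable hx'
    · have h := (hasDerivAt_id' y).div_const ((k : ℝ) + 1)
      refine (h.sub ((h.const_add 1).log (by have := hy.1; positivity))).congr_deriv ?_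
      field_simp
      ring
    · obtain ⟨h0, h1⟩ := inv_sub_inv_add_mem_Icc hy.1.le k
      rw [Real.norm_of_nonneg h0]
      exact h1.trans (mul_le_mul_of_nonneg_right hy.2.le (by positivity))
  have hlog : HasDerivAt (fun y : ℝ => -eulerMascheroniConstant * y - log y
      + ∑' k : ℕ, (y / (k + 1) - log (1 + y / (k + 1)))) (polygamma 0 x) x := by
    refine ((((hasDerivAt_id' x).const_mul _).sub (hasDerivAt_log hx.ne')).add
      hseries).congr_deriv ?_
    simp [polygamma]
  refine hlog.congr_of_eventuallyEq ?_
  filter_upwards [Ioi_mem_nhds hx] with y hy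
  rw [(hasSum_log_Gamma hy).tsum_eq]
  ring

theorem hasDerivAt_polygamma_zero {x : ℝ} (hx : 0 < x) :
    HasDerivAt (polygamma 0) (polygamma 1 x) x := by
  have hx' : x ∈ Set.Ioi (x / 2) := half_lt_self hx
  have hseries : HasDerivAt (fun y : ℝ => ∑' k : ℕ, (((k : ℝ) + 1)⁻¹ - (y + k + 1)⁻¹))
      (∑' k : ℕ, ((x + k + 1) ^ 2)⁻¹) x := by
    refine hasDerivAt_tsum_of_isPreconnected
      (g := fun (k : ℕ) (y : ℝ) => ((k : ℝ) + 1)⁻¹ - (y + k + 1)⁻¹)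
      (g' := fun (k : ℕ) (y : ℝ) => ((y + k + 1) ^ 2)⁻¹) (summable_inv_add_pow (x / 2) le_rfl)
      isOpen_Ioi isPreconnected_Ioi (fun k y (hy : x / 2 < y) => ?_)
      (fun k y (hy : x / 2 < y) => ?_) hx' ?_ hx'
    · have hy0 : 0 < y + k + 1 := by linarith [(k.cast_nonneg : (0 : ℝ) ≤ k)]
      refine ((((hasDerivAt_id' y).add_const (k : ℝ)).add_const 1).fun_inv hy0.ne'
        |>.const_sub _).congr_deriv ?_
      ring
    · rw [Real.norm_of_nonneg (by positivity)]
      exact inv_anti₀ (by positivity) (pow_le_pow_left₀ (by positivity) (by linarith) 2)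
    · exact Summable.of_nonneg_of_le (fun k => (inv_sub_inv_add_mem_Icc hx.le k).1)
        (fun k => (inv_sub_inv_add_mem_Icc hx.le k).2)
        ((summable_inv_add_pow 1 le_rfl).mul_left x)
  show HasDerivAt (fun y => -eulerMascheroniConstant - y⁻¹ + _) _ x
  refine (((hasDerivAt_inv hx.ne').const_sub _).add hseries).congr_deriv ?_
  simp only [polygamma]
  rw [(summable_inv_add_pow x le_rfl).tsum_eq_zero_add]
  push_cast
  simp [add_assoc]

theorem hasDerivAt_polygamma_succ (m : ℕ) {x : ℝ} (hx : 0 < x) :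
    HasDerivAt (polygamma (m + 1)) (polygamma (m + 2) x) x := by
  have hx' : x ∈ Set.Ioi (x / 2) := half_lt_self hx
  have hseries : HasDerivAt (fun y : ℝ => ∑' k : ℕ, ((y + k) ^ (m + 2))⁻¹)
      (∑' k : ℕ, (-(m + 2 : ℝ) * ((x + k) ^ (m + 3))⁻¹)) x := by
    refine hasDerivAt_tsum_of_isPreconnected
      (g := fun (k : ℕ) (y : ℝ) => ((y + k) ^ (m + 2))⁻¹)
      (g' := fun (k : ℕ) (y : ℝ) => -(m + 2 : ℝ) * ((y + k) ^ (m + 3))⁻¹)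
      ((summable_inv_add_pow (x / 2) (by omega : 2 ≤ m + 3)).mul_left (m + 2 : ℝ))
      isOpen_Ioi isPreconnected_Ioi (fun k y (hy : x / 2 < y) => ?_)
      (fun k y (hy : x / 2 < y) => ?_) hx' (summable_inv_add_pow x (by omega)) hx'
    · have hy0 : 0 < y + k := by linarith [(k.cast_nonneg : (0 : ℝ) ≤ k)]
      refine ((((hasDerivAt_id' y).add_const (k : ℝ)).fun_pow (m + 2)).fun_inv
        (by positivity)).congr_deriv ?_
      rw [show m + 2 - 1 = m + 1 by omega]
      field_simp
      push_cast
      ring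
    · have hy0 : 0 < y + k := by linarith [(k.cast_nonneg : (0 : ℝ) ≤ k)]
      rw [norm_mul, norm_neg, Real.norm_of_nonneg (by positivity),
        Real.norm_of_nonneg (by positivity)]
      gcongr
  refine (hseries.const_mul ((-1) ^ m * ((m + 1)! : ℝ))).congr_deriv ?_
  simp only [polygamma, ← tsum_mul_left, Nat.factorial_succ (m + 1)]
  push_cast
  ring_nf

theorem hasDerivAt_polygamma (m : ℕ) {x : ℝ} (hx : 0 < x) :
    HasDerivAt (polygamma m) (polygamma (m + 1) x) x := by
  cases m with
  | zero => exact hasDerivAt_polygamma_zero hx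
  | succ m => exact hasDerivAt_polygamma_succ m hx

theorem log_Gamma_add_one {x : ℝ} (hx : 0 < x) :
    log (Gamma (x + 1)) = log (Gamma x) + log x := by
  rw [Gamma_add_one hx.ne', log_mul hx.ne' (Gamma_pos_of_pos hx).ne', add_comm]

theorem polygamma_zero_le_log {x : ℝ} (hx : 0 < x) : polygamma 0 x ≤ log x := by
  have h := convexOn_log_Gamma.le_slope_of_hasDerivAt (Set.mem_Ioi.2 hx)
    (Set.mem_Ioi.2 (by linarith : 0 < x + 1)) (lt_add_one x) (hasDerivAt_log_Gamma hx)
  rwa [slope_def_field, Function.comp_apply, Function.comp_apply, log_Gamma_add_one hx,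
    add_sub_cancel_left, add_sub_cancel_left, div_one] at h

theorem log_sub_one_le_polygamma_zero {x : ℝ} (hx : 1 < x) : log (x - 1) ≤ polygamma 0 x := by
  have hx1 : 0 < x - 1 := by linarith
  have h := convexOn_log_Gamma.slope_le_of_hasDerivAt (Set.mem_Ioi.2 hx1)
    (Set.mem_Ioi.2 (by linarith : 0 < x)) (sub_one_lt x) (hasDerivAt_log_Gamma (by linarith))
  have h1 := log_Gamma_add_one hx1
  rw [sub_add_cancel] at h1
  rwa [slope_def_field, Function.comp_apply, Function.comp_apply, h1, add_sub_cancel_left,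
    sub_sub_cancel, div_one] at h

theorem hasSum_sub_succ_of_antitone {c : ℕ → ℝ} (hc : Antitone c)
    (h0 : Tendsto c atTop (𝓝 0)) : HasSum (fun k => c k - c (k + 1)) (c 0) := by
  rw [hasSum_iff_tendsto_nat_of_nonneg fun k => sub_nonneg.2 (hc k.le_succ)]
  simp only [sum_range_sub']
  simpa using tendsto_const_nhds.sub h0

theorem hasDerivAt_neg_inv_pow_div {p : ℕ} (hp : p ≠ 0) {t : ℝ} (ht : t ≠ 0) :
    HasDerivAt (fun t : ℝ => -(t ^ p)⁻¹ / p) (t ^ (p + 1))⁻¹ t := by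
  refine (((hasDerivAt_pow p t).fun_inv (pow_ne_zero p ht)).neg.div_const _).congr_deriv ?_
  obtain ⟨q, rfl⟩ := Nat.exists_eq_succ_of_ne_zero hp
  field_simp
  simp only [Nat.succ_eq_add_one, add_tsub_cancel_right]
  ring

theorem sub_inv_pow_div_mem_Icc {a : ℝ} (ha : 0 < a) {p : ℕ} (hp : p ≠ 0) :
    ((a ^ p)⁻¹ - ((a + 1) ^ p)⁻¹) / p ∈ Set.Icc ((a + 1) ^ (p + 1))⁻¹ (a ^ (p + 1))⁻¹ := by
  obtain ⟨c, ⟨hac, hca⟩, hc⟩ := exists_hasDerivAt_eq_slope (fun t : ℝ => -(t ^ p)⁻¹ / p)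
    (fun t => (t ^ (p + 1))⁻¹) (lt_add_one a)
    (fun t ht => (hasDerivAt_neg_inv_pow_div hp (by linarith [ht.1] : t ≠ 0)).continuousAt
      |>.continuousWithinAt)
    (fun t ht => hasDerivAt_neg_inv_pow_div hp (by linarith [ht.1]))
  have hc' : (c ^ (p + 1))⁻¹ = ((a ^ p)⁻¹ - ((a + 1) ^ p)⁻¹) / p := by
    rw [hc]
    ring
  rw [← hc']
  have hc0 : 0 < c := ha.trans hac
  exact ⟨inv_anti₀ (by positivity) (pow_le_pow_left₀ hc0.le hca.le _),
    inv_anti₀ (by positivity) (pow_le_pow_left₀ ha.le hac.le _)⟩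

theorem tsum_inv_add_pow_mem_Icc {x : ℝ} (hx : 0 < x) {p : ℕ} (hp : p ≠ 0) :
    ∑' k : ℕ, ((x + k) ^ (p + 1))⁻¹ ∈
      Set.Icc ((x ^ p)⁻¹ / p) ((x ^ p)⁻¹ / p + (x ^ (p + 1))⁻¹) := by
  set c : ℕ → ℝ := fun k => ((x + k) ^ p)⁻¹ / p
  have hc : Antitone c := fun i j hij => by
    have : (i : ℝ) ≤ j := by exact_mod_cast hij
    dsimp only [c]
    gcongr
  have hlim : Tendsto c atTop (𝓝 0) := by
    have := ((tendsto_pow_atTop hp).comp (tendsto_atTop_add_const_left atTop x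
      tendsto_natCast_atTop_atTop)).inv_tendsto_atTop.div_const (p : ℝ)
    simpa using this
  have htel := hasSum_sub_succ_of_antitone hc hlim
  have hsum := summable_inv_add_pow x (by omega : 2 ≤ p + 1)
  have hbound (k : ℕ) := sub_inv_pow_div_mem_Icc (by positivity : 0 < x + k) hp
  have hc0 : c 0 = (x ^ p)⁻¹ / p := by simp [c]
  rw [hc0] at htel
  refine ⟨hasSum_le (fun k => ?_) htel hsum.hasSum, ?_⟩
  · have := (hbound k).2
    simp only [c, Nat.cast_succ, ← add_assoc, sub_div] at this ⊢
    linarith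
  · rw [hsum.tsum_eq_zero_add, add_comm]
    have hshift : ∑' k : ℕ, ((x + (k + 1 : ℕ)) ^ (p + 1))⁻¹ ≤ (x ^ p)⁻¹ / p := by
      refine hasSum_le (fun k => ?_) ((summable_nat_add_iff 1).2 hsum).hasSum htel
      have := (hbound k).1
      simp only [c, Nat.cast_succ, ← add_assoc, sub_div] at this ⊢
      linarith
    simpa using hshift

theorem mul_pow_mul_tsum_inv_add_pow_mem_Icc {x : ℝ} (hx : 0 < x) {p : ℕ} (hp : p ≠ 0) :
    p * x ^ p * ∑' k : ℕ, ((x + k) ^ (p + 1))⁻¹ ∈ Set.Icc 1 (1 + p / x) := by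
  obtain ⟨hlow, hup⟩ := tsum_inv_add_pow_mem_Icc hx hp
  have hc : (0 : ℝ) < p * x ^ p := by positivity
  constructor
  · calc (1 : ℝ) = p * x ^ p * ((x ^ p)⁻¹ / p) := by field_simp
      _ ≤ _ := by gcongr
  · calc _ ≤ p * x ^ p * ((x ^ p)⁻¹ / p + (x ^ (p + 1))⁻¹) := by gcongr
      _ = 1 + p / x := by field_simp; ring

theorem iteratedDeriv_succ_eqOn_of_hasDerivAt {𝕜 E : Type*} [NontriviallyNormedField 𝕜]
    [NormedAddCommGroup E] [NormedSpace 𝕜 E] {f : 𝕜 → E} {g : ℕ → 𝕜 → E} {U : Set 𝕜}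
    (hU : IsOpen U) (hf : ∀ x ∈ U, HasDerivAt f (g 0 x) x)
    (hg : ∀ m, ∀ x ∈ U, HasDerivAt (g m) (g (m + 1) x) x) (m : ℕ) :
    Set.EqOn (iteratedDeriv (m + 1) f) (g m) U := by
  induction m with
  | zero => exact fun x hx => by simpa using (hf x hx).deriv
  | succ m ih =>
    intro x hx
    rw [iteratedDeriv_succ, (ih.eventuallyEq_of_mem (hU.mem_nhds hx)).deriv_eq]
    exact (hg m x hx).deriv

theorem SderivAt0_succ_eq_sum_polygamma {n r : ℕ} (hrn : r ≤ n) (m : ℕ) :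
    SderivAt0 n r (m + 1) =
      ∑ j ∈ Icc 1 r, (2 ^ (m + 1))⁻¹ * polygamma m (((n : ℝ) - r + j) / 2) := by
  set U := Set.Ioi ((r : ℝ) - n - 1)
  have hpos : ∀ z ∈ U, ∀ j ∈ Icc 1 r, 0 < ((n : ℝ) - r + j + z) / 2 := by
    intro z hz j hj
    have : (1 : ℝ) ≤ j := by exact_mod_cast (mem_Icc.1 hj).1
    have : (r : ℝ) - n - 1 < z := hz
    linarith
  have hhalf (z : ℝ) (j : ℕ) := ((hasDerivAt_id' z).const_add ((n : ℝ) - r + j)).div_const 2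
  have hS : ∀ z ∈ U, HasDerivAt (S n r)
      (∑ j ∈ Icc 1 r, (2 ^ (0 + 1))⁻¹ * polygamma 0 (((n : ℝ) - r + j + z) / 2)) z := by
    intro z hz
    refine HasDerivAt.fun_sum fun j hj => ?_
    refine (((hasDerivAt_log_Gamma (hpos z hz j hj)).comp z (hhalf z j)).sub_const
      _).congr_deriv ?_
    ring
  have h0 : (0 : ℝ) ∈ U := by
    have : (r : ℝ) ≤ n := by exact_mod_cast hrn
    simp only [U, Set.mem_Ioi]
    linarith
  have := iteratedDeriv_succ_eqOn_of_hasDerivAt (g := fun m z => ∑ j ∈ Icc 1 r,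
    (2 ^ (m + 1))⁻¹ * polygamma m (((n : ℝ) - r + j + z) / 2)) isOpen_Ioi hS
    (fun m z hz => ?_) m h0
  · simpa [SderivAt0] using this
  · refine HasDerivAt.fun_sum fun j hj => ?_
    refine (((hasDerivAt_polygamma m (hpos z hz j hj)).comp z (hhalf z j)).const_mul
      _).congr_deriv ?_
    ring

theorem tendsto_sum_div_card_of_mem_Icc {α ι : Type*} {l : Filter α} {s : α → Finset ι}
    {f : α → ι → ℝ} {L U : α → ℝ} {c : ℝ} (hL : Tendsto L l (𝓝 c)) (hU : Tendsto U l (𝓝 c))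
    (hf : ∀ᶠ a in l, (s a).Nonempty ∧ ∀ i ∈ s a, f a i ∈ Set.Icc (L a) (U a)) :
    Tendsto (fun a => (∑ i ∈ s a, f a i) / #(s a)) l (𝓝 c) := by
  refine tendsto_of_tendsto_of_tendsto_of_le_of_le' hL hU ?_ ?_ <;>
    filter_upwards [hf] with a ⟨hne, hmem⟩
  · rw [le_div_iff₀ (by exact_mod_cast hne.card_pos), mul_comm, ← nsmul_eq_mul]
    exact card_nsmul_le_sum _ _ _ fun i hi => (hmem i hi).1
  · rw [div_le_iff₀ (by exact_mod_cast hne.card_pos), mul_comm, ← nsmul_eq_mul]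
    exact sum_le_card_nsmul _ _ _ fun i hi => (hmem i hi).2

theorem tendsto_SderivAt0_one {r : ℕ → ℕ}
    (hr : ∀ᶠ n in atTop, 1 ≤ r n ∧ (r n : ℝ) ≤ n / 2) :
    Tendsto (fun n : ℕ => SderivAt0 n (r n) 1 / ((r n : ℝ) / 2 * log n)) atTop (𝓝 1) := by
  have hlog : Tendsto (fun n : ℕ => log n) atTop atTop :=
    tendsto_log_atTop.comp tendsto_natCast_atTop_atTop
  have hL : Tendsto (fun n : ℕ => 1 - log 8 / log n) atTop (𝓝 1) := by
    simpa [div_eq_mul_inv] using (hlog.inv_tendsto_atTop.const_mul (log 8)).const_sub 1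
  have hmain := tendsto_sum_div_card_of_mem_Icc (s := fun n => Icc 1 (r n))
    (f := fun n j => polygamma 0 (((n : ℝ) - r n + j) / 2) / log n) hL tendsto_const_nhds ?_
  · refine hmain.congr' ?_
    filter_upwards [hr] with n ⟨hr1, hrn⟩
    rw [SderivAt0_succ_eq_sum_polygamma (by exact_mod_cast (by linarith : (r n : ℝ) ≤ n)),
      Nat.card_Icc, Nat.add_sub_cancel, ← mul_sum, ← sum_div]
    field_simp
    ring
  · filter_upwards [hr, eventually_ge_atTop 8] with n ⟨hr1, hrn⟩ hn8
    refine ⟨nonempty_Icc.2 hr1, fun j hj => ?_⟩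
    have hn : (8 : ℝ) ≤ n := by exact_mod_cast hn8
    have hj1 : (1 : ℝ) ≤ j := by exact_mod_cast (mem_Icc.1 hj).1
    have hjr : (j : ℝ) ≤ r n := by exact_mod_cast (mem_Icc.1 hj).2
    have hlogn : 0 < log n := log_pos (by linarith)
    have hupper : polygamma 0 (((n : ℝ) - r n + j) / 2) ≤ log n :=
      (polygamma_zero_le_log (by linarith)).trans (log_le_log (by linarith) (by linarith))
    have hlower : log n - log 8 ≤ polygamma 0 (((n : ℝ) - r n + j) / 2) := by
      rw [← log_div (by positivity) (by norm_num)]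
      exact (log_le_log (by positivity) (by linarith)).trans
        (log_sub_one_le_polygamma_zero (by linarith))
    constructor
    · rw [le_div_iff₀ hlogn]
      field_simp
      linarith
    · rwa [div_le_one hlogn]

theorem div_pow_mul_tsum_inv_add_pow_mem_Icc {a N x : ℝ} (ha : 0 < a) (hax : a < 2 * x)
    (hxN : 2 * x ≤ N) {p : ℕ} (hp : p ≠ 0) :
    (N / (2 * x)) ^ p * (p * x ^ p * ∑' k : ℕ, ((x + k) ^ (p + 1))⁻¹) ∈
      Set.Icc 1 ((N / a) ^ p * (1 + 2 * p * a⁻¹)) := by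
  obtain ⟨hT1, hT2⟩ := mul_pow_mul_tsum_inv_add_pow_mem_Icc (by linarith : 0 < x) hp
  have hN : 0 < N := by linarith
  have hN1 : 1 ≤ N / (2 * x) := by rw [one_le_div (by linarith)]; exact hxN
  have hinv : x⁻¹ ≤ 2 * a⁻¹ :=
    calc x⁻¹ ≤ (a / 2)⁻¹ := inv_anti₀ (by positivity) (by linarith)
      _ = 2 * a⁻¹ := by rw [inv_div, div_eq_mul_inv]
  refine ⟨one_le_mul_of_one_le_of_one_le (one_le_pow₀ hN1) hT1,
    mul_le_mul (pow_le_pow_left₀ (by linarith) (by gcongr) p) (hT2.trans ?_)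
      (zero_le_one.trans hT1) (by positivity)⟩
  have := mul_le_mul_of_nonneg_left hinv (Nat.cast_nonneg p : (0 : ℝ) ≤ p)
  rw [div_eq_mul_inv]
  linarith

theorem tendsto_div_sub_pow_mul_one_add_inv {r : ℕ → ℕ}
    (hr : ∀ᶠ n in atTop, (r n : ℝ) ≤ n / 2)
    (h0 : Tendsto (fun n : ℕ => (r n : ℝ) / n) atTop (𝓝 0)) (p : ℕ) (c : ℝ) :
    Tendsto (fun n : ℕ => ((n : ℝ) / (n - r n)) ^ p * (1 + c * ((n : ℝ) - r n)⁻¹))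
      atTop (𝓝 1) := by
  have hratio : Tendsto (fun n : ℕ => (n : ℝ) / (n - r n)) atTop (𝓝 1) := by
    have := ((tendsto_const_nhds (x := (1 : ℝ))).sub h0).inv₀ (by norm_num)
    simp only [sub_zero, inv_one] at this
    refine this.congr' ?_
    filter_upwards [eventually_gt_atTop 0] with n hn
    have : (n : ℝ) ≠ 0 := by positivity
    field_simp
  have hgap : Tendsto (fun n : ℕ => ((n : ℝ) - r n)⁻¹) atTop (𝓝 0) := by
    refine tendsto_inv_atTop_zero.comp (tendsto_atTop_mono' _ ?_
      (tendsto_natCast_atTop_atTop.atTop_div_const (by norm_num : (0 : ℝ) < 2)))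
    filter_upwards [hr] with n hrn
    linarith
  simpa using (hratio.pow p).mul ((hgap.const_mul c).const_add 1)

theorem tendsto_SderivAt0_add_two {r : ℕ → ℕ}
    (hr : ∀ᶠ n in atTop, 1 ≤ r n ∧ (r n : ℝ) ≤ n / 2)
    (h0 : Tendsto (fun n : ℕ => (r n : ℝ) / n) atTop (𝓝 0)) (q : ℕ) :
    Tendsto (fun n : ℕ => SderivAt0 n (r n) (q + 2)
      / ((-1 : ℝ) ^ (q + 2) * (q ! : ℝ) * (r n : ℝ) / (2 * (n : ℝ) ^ (q + 1)))) atTop (𝓝 1) := by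
  have hmain := tendsto_sum_div_card_of_mem_Icc (s := fun n => Icc 1 (r n))
    (f := fun n j => ((n : ℝ) / (2 * (((n : ℝ) - r n + j) / 2))) ^ (q + 1)
      * (((q + 1 : ℕ) : ℝ) * (((n : ℝ) - r n + j) / 2) ^ (q + 1)
        * ∑' k : ℕ, ((((n : ℝ) - r n + j) / 2 + k) ^ (q + 1 + 1))⁻¹))
    tendsto_const_nhds (tendsto_div_sub_pow_mul_one_add_inv (hr.mono fun n h => h.2) h0
      (q + 1) (2 * (q + 1 : ℕ))) ?_
  · refine hmain.congr' ?_
    filter_upwards [hr] with n ⟨hr1, hrn⟩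
    have hn : (0 : ℝ) < n := by
      have : (1 : ℝ) ≤ r n := by exact_mod_cast hr1
      linarith
    rw [SderivAt0_succ_eq_sum_polygamma (by exact_mod_cast (by linarith : (r n : ℝ) ≤ n)),
      Nat.card_Icc, Nat.add_sub_cancel]
    simp only [polygamma]
    rw [div_div_eq_mul_div, sum_div, sum_mul, sum_div]
    refine sum_congr rfl fun j hj => ?_
    have hj1 : (1 : ℝ) ≤ j := by exact_mod_cast (mem_Icc.1 hj).1
    have hx : 0 < ((n : ℝ) - r n + j) / 2 := by linarith
    generalize ((n : ℝ) - r n + j) / 2 = x at hx ⊢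
    generalize ∑' k : ℕ, ((x + k) ^ (q + 2))⁻¹ = T
    have hx0 : x ≠ 0 := hx.ne'
    rw [Nat.factorial_succ, div_pow, mul_pow]
    push_cast
    field_simp
    ring
  · filter_upwards [hr] with n ⟨hr1, hrn⟩
    refine ⟨nonempty_Icc.2 hr1, fun j hj => ?_⟩
    have hj1 : (1 : ℝ) ≤ j := by exact_mod_cast (mem_Icc.1 hj).1
    have hjr : (j : ℝ) ≤ r n := by exact_mod_cast (mem_Icc.1 hj).2
    exact div_pow_mul_tsum_inv_add_pow_mem_Icc (by linarith) (by linarith) (by linarith)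
      q.succ_ne_zero

theorem stmt10 (r : ℕ → ℕ) (hr : ∀ n, 1 ≤ n → 1 ≤ r n ∧ r n ≤ n)
    (h0 : Tendsto (fun n : ℕ => (r n : ℝ) / n) atTop (nhds 0)) :
    Tendsto (fun n : ℕ => SderivAt0 n (r n) 1 / (((r n : ℝ) / 2) * Real.log n))
      atTop (nhds 1)
    ∧ ∀ m : ℕ, 2 ≤ m →
        Tendsto
          (fun n : ℕ => SderivAt0 n (r n) m
            / ((-1 : ℝ) ^ m * ((m - 2).factorial : ℝ) * (r n : ℝ)
                / (2 * (n : ℝ) ^ (m - 1))))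
          atTop (nhds 1) := by
  have hsmall : ∀ᶠ n in atTop, 1 ≤ r n ∧ (r n : ℝ) ≤ n / 2 := by
    filter_upwards [h0.eventually_lt_const (by norm_num : (0 : ℝ) < 1 / 2),
      eventually_ge_atTop 1] with n hn hn1
    have : (0 : ℝ) < n := by exact_mod_cast hn1
    rw [div_lt_iff₀ this] at hn
    exact ⟨(hr n hn1).1, by linarith⟩
  refine ⟨tendsto_SderivAt0_one hsmall, fun m hm => ?_⟩
  obtain ⟨q, rfl⟩ := Nat.exists_eq_add_of_le' hm
  simpa using tendsto_SderivAt0_add_two hsmall h0 q
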